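/- arXiv:2411.00119 — 5 statements merged into one kernel-verified Lean document; each statement's English description precedes it below -/
import Mathlib

section
/- Let c ∈ A be a strong Condorcet winner for the preference-count matrix N. Then the sigmoid loss L̃ is strictly decreasing in the rating of c: for any rating vector θ : A → ℝ and any real numbers t < t', the vector θ' obtained from θ by setting the rating of c to t' (and leaving all other coordinates unchanged) satisfies L̃(θ') < L̃(θ[c := t]); equivalently, for every fixed assignment of ratings to A \ {c}, the function t ↦ L̃(θ with θ(c) = t) is strictly antitone on ℝ. -/
/-!
Only the pairs involving `c` feel a change of its rating. Since `σ (-x) = 1 - σ x`, the two terms of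
a pair `{c, a}` combine to `N c a - (N c a - N a c) * σ (t - θ a)`, which strictly decreases in `t`
because `σ` is strictly increasing and `c` beats `a`.
-/

open Finset Function

theorem Finset.strictAnti_sum {ι : Type*} {s : Finset ι} (hs : s.Nonempty) {f : ι → ℝ → ℝ}
    (hf : ∀ i ∈ s, StrictAnti (f i)) : StrictAnti fun t => ∑ i ∈ s, f i t :=
  fun _ _ h => sum_lt_sum_of_nonempty hs fun i hi => hf i hi h

theorem Fintype.sum_sum_update {A X M : Type*} [Fintype A] [DecidableEq A] [AddCommMonoid M]
    (F : A → A → X → X → M) (θ : A → X) (c : A) (x : X) :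
    ∑ a, ∑ b, F a b (update θ c x a) (update θ c x b) =
      F c c x x + ∑ a ∈ univ.erase c, (F c a x (θ a) + F a c (θ a) x) +
        ∑ a ∈ univ.erase c, ∑ b ∈ univ.erase c, F a b (θ a) (θ b) := by
  have hrow : ∀ a ∈ univ.erase c, ∑ b, F a b (update θ c x a) (update θ c x b) =
      F a c (θ a) x + ∑ b ∈ univ.erase c, F a b (θ a) (θ b) := fun a ha => by
    rw [← add_sum_erase _ _ (mem_univ c), update_self, update_of_ne (ne_of_mem_erase ha)]
    exact congrArg _ (Finset.sum_congr rfl fun b hb => by rw [update_of_ne (ne_of_mem_erase hb)])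
  have hc : ∑ b, F c b (update θ c x c) (update θ c x b) =
      F c c x x + ∑ b ∈ univ.erase c, F c b x (θ b) := by
    rw [← add_sum_erase _ _ (mem_univ c), update_self]
    exact congrArg _ (Finset.sum_congr rfl fun b hb => by rw [update_of_ne (ne_of_mem_erase hb)])
  rw [← add_sum_erase _ _ (mem_univ c), Finset.sum_congr rfl hrow, hc, sum_add_distrib,
    sum_add_distrib]
  abel

theorem strictAnti_two_player_loss {σ : ℝ → ℝ} (hneg : ∀ x, σ (-x) = 1 - σ x)
    (hmono : StrictMono σ) {m n : ℝ} (hmn : m < n) (s : ℝ) :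
    StrictAnti fun t => n * σ (s - t) + m * σ (t - s) := by
  have hform : ∀ t, n * σ (s - t) + m * σ (t - s) = n - (n - m) * σ (t - s) := fun t => by
    rw [← neg_sub, hneg]; ring
  intro t t' h
  simp only [hform]
  linarith [mul_lt_mul_of_pos_left (hmono (sub_lt_sub_right h s)) (sub_pos.2 hmn)]

theorem sco_sigmoid_loss_strictAnti_in_condorcet_winner_general
    {A : Type*} [Fintype A] [DecidableEq A]
    (hA : 1 < Fintype.card A)
    (N : A → A → ℕ)
    (τ : ℝ) (hτ : 0 < τ)
    (c : A) (hc : ∀ b, b ≠ c → N b c < N c b)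
    (σ : ℝ → ℝ) (hσ : ∀ x, σ x = 1 / (1 + Real.exp (-x / τ)))
    (L : (A → ℝ) → ℝ)
    (hL : ∀ θ : A → ℝ, L θ = ∑ a : A, ∑ b : A, (N a b : ℝ) * σ (θ b - θ a))
    (θ : A → ℝ) :
    StrictAnti (fun t : ℝ => L (Function.update θ c t)) := by
  have hσ_eq : σ = fun x => Real.sigmoid (x / τ) :=
    funext fun x => by rw [hσ, Real.sigmoid_def, one_div, neg_div]
  have hneg : ∀ x, σ (-x) = 1 - σ x := fun x => by
    simp only [hσ_eq, neg_div, Real.sigmoid_neg]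
  have hmono : StrictMono σ :=
    hσ_eq ▸ Real.sigmoid_strictMono.comp fun _ _ h => div_lt_div_of_pos_right h hτ
  have hothers : (univ.erase c).Nonempty := by
    obtain ⟨b, hb⟩ := Fintype.exists_ne_of_one_lt_card hA c
    exact ⟨b, mem_erase.mpr ⟨hb, mem_univ b⟩⟩
  have hpairs : StrictAnti fun t =>
      ∑ a ∈ univ.erase c, ((N c a : ℝ) * σ (θ a - t) + (N a c : ℝ) * σ (t - θ a)) :=
    strictAnti_sum hothers fun a ha =>
      strictAnti_two_player_loss hneg hmono (by exact_mod_cast hc a (ne_of_mem_erase ha)) (θ a)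
  intro t t' h
  simp only [hL, Fintype.sum_sum_update (fun a b x y => (N a b : ℝ) * σ (y - x)), sub_self]
  linarith [hpairs h]

/-- If `c` is a strong Condorcet winner for the preference-count
matrix `N`, then the sigmoid loss is strictly decreasing (strictly antitone)
in the rating of `c`. -/
theorem sco_sigmoid_loss_strictAnti_in_condorcet_winner
    {A : Type*} [Fintype A] [DecidableEq A]
    (hA : 1 < Fintype.card A)
    (N : A → A → ℕ) (hdiag : ∀ a, N a a = 0)
    (τ : ℝ) (hτ : 0 < τ)
    (c : A) (hc : ∀ b, b ≠ c → N b c < N c b)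
    (σ : ℝ → ℝ) (hσ : ∀ x, σ x = 1 / (1 + Real.exp (-x / τ)))
    (L : (A → ℝ) → ℝ)
    (hL : ∀ θ : A → ℝ, L θ = ∑ a : A, ∑ b : A, (N a b : ℝ) * σ (θ b - θ a))
    (θ : A → ℝ) :
    StrictAnti (fun t : ℝ => L (Function.update θ c t)) :=
  sco_sigmoid_loss_strictAnti_in_condorcet_winner_general hA N τ hτ c hc σ hσ L hL θ
end

section
/- Let c ∈ A be a strong Condorcet winner for the preference-count matrix N, and let θ_max > 0. If θ* minimizes the sigmoid loss L̃ over the ℓ∞ ball {θ : A → ℝ | |θ(a)| ≤ θ_max for all a ∈ A}, then θ*(c) = θ_max. -/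
/-!
If `θ c < θmax`, raise `θ c` to `θmax`. Only the terms pairing `c` with some `b ≠ c` change, and
since `σ (-x) = 1 - σ x`, the two of them together equal `N c b - (N c b - N b c) σ (θ c - θ b)`,
which strictly decreases as `θ c` grows because `c` beats `b`. So the loss would strictly drop
inside the ball, contradicting minimality.
-/

open Finset Function

section PairwiseSum

variable {A : Type*} [Fintype A] [DecidableEq A]

theorem exists_sum_sum_update_eq (F : A → A → ℝ → ℝ) (θ : A → ℝ) (c : A) :
    ∃ R, ∀ t, ∑ a, ∑ b, F a b (update θ c t b - update θ c t a) =
      R + ∑ b ∈ univ.erase c, (F c b (θ b - t) + F b c (t - θ b)) := by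
  refine ⟨F c c 0 + ∑ a ∈ univ.erase c, ∑ b ∈ univ.erase c, F a b (θ b - θ a), fun t => ?_⟩
  have hsplit : ∀ f : A → ℝ, ∑ a, f a = f c + ∑ a ∈ univ.erase c, f a := fun f =>
    (add_sum_erase univ f (mem_univ c)).symm
  have hupdate : ∀ a ∈ univ.erase c, update θ c t a = θ a := fun a ha =>
    update_of_ne (ne_of_mem_erase ha) t θ
  rw [hsplit, hsplit, sum_congr rfl fun a _ => hsplit _]
  simp +contextual only [update_self, sub_self, sum_add_distrib, hupdate]
  ring

theorem strictAnti_sum_sum_update {g : ℝ → ℝ} (hg : StrictMono g) (hneg : ∀ x, g (-x) = 1 - g x)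
    [Nontrivial A] (N : A → A → ℝ) {c : A} (hc : ∀ b, b ≠ c → N b c < N c b) (θ : A → ℝ) :
    StrictAnti fun t => ∑ a, ∑ b, N a b * g (update θ c t b - update θ c t a) := by
  obtain ⟨R, hR⟩ := exists_sum_sum_update_eq (fun a b x => N a b * g x) θ c
  have hpair : ∀ b t, N c b * g (θ b - t) + N b c * g (t - θ b) =
      N c b - (N c b - N b c) * g (t - θ b) := fun b t => by
    rw [← neg_sub, hneg]
    ring
  intro s t hst
  simp only [hR, hpair, add_lt_add_iff_left]
  refine sum_lt_sum_of_nonempty univ_nontrivial.erase_nonempty fun b hb => ?_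
  have hgap : 0 < N c b - N b c := sub_pos.mpr (hc b (ne_of_mem_erase hb))
  have hg_lt : g (s - θ b) < g (t - θ b) := hg (sub_lt_sub_right hst _)
  linarith [mul_lt_mul_of_pos_left hg_lt hgap]

end PairwiseSum

theorem sco_global_min_puts_condorcet_winner_at_thetaMax_general
    {A : Type*} [Fintype A]
    (hA : 1 < Fintype.card A)
    (N : A → A → ℕ)
    (τ : ℝ) (hτ : 0 < τ)
    (c : A) (hc : ∀ b, b ≠ c → N b c < N c b)
    (σ : ℝ → ℝ) (hσ : ∀ x, σ x = 1 / (1 + Real.exp (-x / τ)))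
    (L : (A → ℝ) → ℝ)
    (hL : ∀ θ : A → ℝ, L θ = ∑ a : A, ∑ b : A, (N a b : ℝ) * σ (θ b - θ a))
    (θmax : ℝ)
    (θstar : A → ℝ) (hball : ∀ a, |θstar a| ≤ θmax)
    (hmin : ∀ θ : A → ℝ, (∀ a, |θ a| ≤ θmax) → L θstar ≤ L θ) :
    θstar c = θmax := by
  classical
  have : Nontrivial A := Fintype.one_lt_card_iff_nontrivial.mp hA
  have hσ_sigmoid : σ = fun x => Real.sigmoid (x / τ) :=
    funext fun x => by rw [hσ, Real.sigmoid, neg_div, one_div]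
  have hσ_mono : StrictMono σ :=
    hσ_sigmoid ▸ Real.sigmoid_strictMono.comp (strictMono_div_right_of_pos hτ)
  have hσ_neg : ∀ x, σ (-x) = 1 - σ x := fun x => by
    simp only [hσ_sigmoid, neg_div, Real.sigmoid_neg]
  have hanti := strictAnti_sum_sum_update hσ_mono hσ_neg (fun a b => (N a b : ℝ))
    (fun b hb => by exact_mod_cast hc b hb) θstar
  refine le_antisymm (abs_le.mp (hball c)).2 (not_lt.mp fun hlt => ?_)
  have hθmax : 0 ≤ θmax := (abs_nonneg _).trans (hball c)
  have hball' : ∀ a, |update θstar c θmax a| ≤ θmax :=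
    (forall_update_iff θstar fun _ x => |x| ≤ θmax).mpr ⟨(abs_of_nonneg hθmax).le, fun a _ => hball a⟩
  have hdecrease := hanti hlt
  simp only [update_eq_self, ← hL] at hdecrease
  exact (hmin _ hball').not_gt hdecrease

/-- If `c` is a strong Condorcet winner and `θ*` minimizes the
sigmoid loss over the ℓ∞ ball of radius `θmax > 0`, then `θ* c = θmax`. -/
theorem sco_global_min_puts_condorcet_winner_at_thetaMax
    {A : Type*} [Fintype A] [DecidableEq A]
    (hA : 1 < Fintype.card A)
    (N : A → A → ℕ) (hdiag : ∀ a, N a a = 0)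
    (τ : ℝ) (hτ : 0 < τ)
    (c : A) (hc : ∀ b, b ≠ c → N b c < N c b)
    (σ : ℝ → ℝ) (hσ : ∀ x, σ x = 1 / (1 + Real.exp (-x / τ)))
    (L : (A → ℝ) → ℝ)
    (hL : ∀ θ : A → ℝ, L θ = ∑ a : A, ∑ b : A, (N a b : ℝ) * σ (θ b - θ a))
    (θmax : ℝ) (hθmax : 0 < θmax)
    (θstar : A → ℝ) (hball : ∀ a, |θstar a| ≤ θmax)
    (hmin : ∀ θ : A → ℝ, (∀ a, |θ a| ≤ θmax) → L θstar ≤ L θ) :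
    θstar c = θmax :=
  sco_global_min_puts_condorcet_winner_at_thetaMax_general hA N τ hτ c hc σ hσ L hL θmax θstar hball
    hmin
end

section
/- If the preference-count matrix N admits a strong Condorcet winner c ∈ A, then the sigmoid loss L̃ has no global minimizer over all of ℝ^A: for every rating vector θ : A → ℝ there exists θ' : A → ℝ with L̃(θ') < L̃(θ) (in particular, the infimum of L̃ over ℝ^A is not attained). -/
/-!
Raising the rating of the Condorcet winner `c` leaves every comparison not involving `c`
unchanged. By `σ(-x) = 1 - σ(x)`, the two terms comparing `c` with `b` add up to
`N(b,c) + (N(c,b) - N(b,c)) σ(θ(b) - θ(c))`, which strictly decreases as `θ(c)` grows because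
`N(c,b) > N(b,c)` and `σ` is strictly increasing.
-/

open Finset Real

theorem Fintype.sum_sum_eq_sum_erase_sum_erase_add {A M : Type*} [Fintype A] [DecidableEq A]
    [AddCommMonoid M] (f : A → A → M) (c : A) :
    ∑ a, ∑ b, f a b = ∑ a ∈ univ.erase c, ∑ b ∈ univ.erase c, f a b
      + (f c c + ∑ b ∈ univ.erase c, (f b c + f c b)) := by
  have hsplit (g : A → M) : ∑ a, g a = g c + ∑ a ∈ univ.erase c, g a :=
    (add_sum_erase _ g (mem_univ c)).symm
  simp only [hsplit]
  rw [sum_add_distrib, sum_add_distrib]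
  abel

theorem StrictMono.mul_comp_neg_add_mul_lt {σ : ℝ → ℝ} (hσ : StrictMono σ)
    (hneg : ∀ x, σ (-x) = 1 - σ x) {m n x y : ℝ} (hmn : m < n) (hxy : x < y) :
    m * σ (-x) + n * σ x < m * σ (-y) + n * σ y := by
  have := hσ hxy
  rw [hneg, hneg]
  nlinarith

noncomputable def pairwiseLoss {A : Type*} [Fintype A] (N : A → A → ℕ) (σ : ℝ → ℝ)
    (θ : A → ℝ) : ℝ :=
  ∑ a, ∑ b, (N a b : ℝ) * σ (θ b - θ a)

theorem pairwiseLoss_lt_of_raise_winner {A : Type*} [Fintype A] [DecidableEq A]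
    {N : A → A → ℕ} {σ : ℝ → ℝ} (hσ : StrictMono σ) (hneg : ∀ x, σ (-x) = 1 - σ x)
    {c : A} (hc : ∀ b, b ≠ c → N b c < N c b) (hA : ∃ b, b ≠ c) {θ θ' : A → ℝ}
    (hθc : θ c < θ' c) (hθ : ∀ b, b ≠ c → θ' b = θ b) :
    pairwiseLoss N σ θ' < pairwiseLoss N σ θ := by
  unfold pairwiseLoss
  simp only [Fintype.sum_sum_eq_sum_erase_sum_erase_add _ c]
  have hunchanged : ∑ a ∈ univ.erase c, ∑ b ∈ univ.erase c, (N a b : ℝ) * σ (θ' b - θ' a)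
      = ∑ a ∈ univ.erase c, ∑ b ∈ univ.erase c, (N a b : ℝ) * σ (θ b - θ a) :=
    sum_congr rfl fun a ha => sum_congr rfl fun b hb => by
      rw [hθ a (ne_of_mem_erase ha), hθ b (ne_of_mem_erase hb)]
  have hpairs : ∑ b ∈ univ.erase c, ((N b c : ℝ) * σ (θ' c - θ' b) + N c b * σ (θ' b - θ' c))
      < ∑ b ∈ univ.erase c, ((N b c : ℝ) * σ (θ c - θ b) + N c b * σ (θ b - θ c)) := by
    obtain ⟨b₀, hb₀⟩ := hA
    refine sum_lt_sum_of_nonempty ⟨b₀, mem_erase.2 ⟨hb₀, mem_univ _⟩⟩ fun b hb => ?_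
    have hb := ne_of_mem_erase hb
    have key := hσ.mul_comp_neg_add_mul_lt hneg (m := N b c) (n := N c b)
      (x := θ b - θ' c) (y := θ b - θ c) (by exact_mod_cast hc b hb) (by linarith)
    rw [hθ b hb, ← neg_sub (θ b), ← neg_sub (θ b)]
    exact key
  simp only [sub_self]
  linarith

theorem sco_no_global_minimizer_with_condorcet_winner_general
    {A : Type*} [Fintype A]
    (hA : 1 < Fintype.card A)
    (N : A → A → ℕ)
    (τ : ℝ) (hτ : 0 < τ)
    (c : A) (hc : ∀ b, b ≠ c → N b c < N c b)
    (σ : ℝ → ℝ) (hσ : ∀ x, σ x = 1 / (1 + Real.exp (-x / τ)))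
    (L : (A → ℝ) → ℝ)
    (hL : ∀ θ : A → ℝ, L θ = ∑ a : A, ∑ b : A, (N a b : ℝ) * σ (θ b - θ a)) :
    ∀ θ : A → ℝ, ∃ θ' : A → ℝ, L θ' < L θ := by
  classical
  intro θ
  have hσ_eq : σ = fun x => sigmoid (x / τ) :=
    funext fun x => by rw [hσ, sigmoid_def, neg_div, one_div]
  have hL_eq : L = pairwiseLoss N σ := funext hL
  have hmono : StrictMono σ := hσ_eq ▸ sigmoid_strictMono.comp (strictMono_div_right_of_pos hτ)
  have hneg (x : ℝ) : σ (-x) = 1 - σ x := by simp only [hσ_eq, neg_div, sigmoid_neg]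
  refine ⟨Function.update θ c (θ c + 1), ?_⟩
  rw [hL_eq]
  exact pairwiseLoss_lt_of_raise_winner hmono hneg hc (Fintype.exists_ne_of_one_lt_card hA c)
    (by simp) fun b hb => Function.update_of_ne hb _ _

/-- If the preference-count matrix `N` admits a strong Condorcet
winner, then the sigmoid loss has no global minimizer over all of ℝ^A: every
rating vector is strictly improved upon by some other rating vector. -/
theorem sco_no_global_minimizer_with_condorcet_winner
    {A : Type*} [Fintype A] [DecidableEq A]
    (hA : 1 < Fintype.card A)
    (N : A → A → ℕ) (hdiag : ∀ a, N a a = 0)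
    (τ : ℝ) (hτ : 0 < τ)
    (c : A) (hc : ∀ b, b ≠ c → N b c < N c b)
    (σ : ℝ → ℝ) (hσ : ∀ x, σ x = 1 / (1 + Real.exp (-x / τ)))
    (L : (A → ℝ) → ℝ)
    (hL : ∀ θ : A → ℝ, L θ = ∑ a : A, ∑ b : A, (N a b : ℝ) * σ (θ b - θ a)) :
    ∀ θ : A → ℝ, ∃ θ' : A → ℝ, L θ' < L θ :=
  sco_no_global_minimizer_with_condorcet_winner_general hA N τ hτ c hc σ hσ L hL
end

section
/- Let [⪰] be a preference profile over A. The minimum of the discrete loss over injective rating vectors equals the minimum over strict linear orders of the sum of Kendall-tau distances to the votes: min_{θ : A → ℝ injective} Σ_{v ∈ [⪰]} #{(i,j) : 0 ≤ i < j < |v| and θ(v[j]) > θ(v[i])} = min_{R a strict linear order on A} Σ_{v ∈ [⪰]} K_d(v, R). Consequently, an injective θ minimizes the discrete loss if and only if the ranking R_θ it induces (a ≻ b iff θ(a) > θ(b)) is an optimal ranking, i.e., one minimizing Σ_{v ∈ [⪰]} K_d(v, R) over all strict linear orders R on A. -/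
/-!
For a repetition-free vote `v`, the index pairs `(i, j)` with `i < j` and
`θ (v[i]) < θ (v[j])` correspond bijectively, via `(i, j) ↦ (v[i], v[j])`, to the pairs
of elements ordered differently by `v` and by the ranking `R_θ`. Hence the discrete loss
of an injective `θ` is the Kendall-tau cost of `R_θ`. Every linear order on the finite set `A` embeds into `ℝ`,
so every ranking is some `R_θ`, and the two minimisation problems have the same set of values.
-/

/-- Kendall-tau distance from a vote `v` (an injective list, highest-ranked
first) to a strict linear order `lt` on `A` ⊇ elements of `v`: the number of
unordered pairs of distinct elements of `v` ordered differently by `v` and by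
`lt`, counted by enumerating each pair `(x, y)` with `x` ranked above `y` in
`v` but `x` below `y` (i.e. `lt x y`) in the order. -/
def voteKendallTau {A : Type*} [DecidableEq A] (v : List A)
    (lt : A → A → Prop) [DecidableRel lt] : ℕ :=
  ((v.toFinset ×ˢ v.toFinset).filter
      (fun p : A × A => v.idxOf p.1 < v.idxOf p.2 ∧ lt p.1 p.2)).card

/-- Sum of Kendall-tau distances from all votes of a profile to the strict
linear order given by a `LinearOrder` structure `r` on `A`. -/
def profileKendallTau {A : Type*} [DecidableEq A]
    (profile : Multiset (List A)) (r : LinearOrder A) : ℕ :=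
  (profile.map (fun v => voteKendallTau v (fun a b => r.lt a b))).sum

/-- The discrete loss of a rating vector `θ`: the number of index pairs
`i < j` within each vote on which `θ` misorders the vote, summed over votes. -/
noncomputable def discreteLoss {A : Type*} (profile : Multiset (List A))
    (θ : A → ℝ) : ℕ :=
  (profile.map (fun v =>
      (Finset.univ.filter
          (fun p : Fin v.length × Fin v.length =>
            (p.1 : ℕ) < (p.2 : ℕ) ∧ θ (v.get p.1) < θ (v.get p.2))).card)).sum

theorem LinearOrder.lift'_eq_self_of_strictMono {α β : Type*} [LinearOrder α] [LinearOrder β]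
    {f : α → β} (hf : StrictMono f) : LinearOrder.lift' f hf.injective = ‹LinearOrder α› :=
  LinearOrder.ext_lt fun _ _ => hf.lt_iff_lt

theorem LinearOrder.exists_lift'_real_eq {A : Type*} [Finite A] (r : LinearOrder A) :
    ∃ (θ : A → ℝ) (hθ : Function.Injective θ), LinearOrder.lift' θ hθ = r := by
  let := r
  obtain ⟨e⟩ := nonempty_orderEmbedding_of_finite_infinite A ℝ
  exact ⟨e, e.injective, LinearOrder.lift'_eq_self_of_strictMono e.strictMono⟩

theorem card_filter_get_lt_eq_voteKendallTau {A : Type*} [DecidableEq A] {v : List A}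
    (hv : v.Nodup) (lt : A → A → Prop) [DecidableRel lt] :
    (Finset.univ.filter fun p : Fin v.length × Fin v.length =>
        (p.1 : ℕ) < p.2 ∧ lt (v.get p.1) (v.get p.2)).card = voteKendallTau v lt := by
  unfold voteKendallTau
  apply Finset.card_bij (fun p _ => (v.get p.1, v.get p.2))
  · rintro ⟨i, j⟩ hp
    simp only [Finset.mem_filter, Finset.mem_univ, true_and] at hp
    simp only [Finset.mem_filter, Finset.mem_product, List.mem_toFinset,
      List.get_idxOf hv]
    exact ⟨⟨List.get_mem v i, List.get_mem v j⟩, hp⟩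
  · rintro ⟨i, j⟩ - ⟨i', j'⟩ - he
    have hget := List.nodup_iff_injective_get.1 hv
    simp only [Prod.mk.injEq] at he
    exact Prod.ext (hget he.1) (hget he.2)
  · rintro ⟨x, y⟩ hp
    simp only [Finset.mem_filter, Finset.mem_product, List.mem_toFinset] at hp
    obtain ⟨⟨hx, hy⟩, hxy⟩ := hp
    refine ⟨(⟨v.idxOf x, List.idxOf_lt_length_iff.2 hx⟩,
      ⟨v.idxOf y, List.idxOf_lt_length_iff.2 hy⟩), ?_, by simp⟩
    simpa [List.idxOf_get] using hxy

theorem discreteLoss_eq_profileKendallTau {A : Type*} [DecidableEq A]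
    {profile : Multiset (List A)} (hnodup : ∀ v ∈ profile, v.Nodup)
    {θ : A → ℝ} (hθ : Function.Injective θ) :
    discreteLoss profile θ = profileKendallTau profile (LinearOrder.lift' θ hθ) :=
  congrArg Multiset.sum <| Multiset.map_congr rfl fun v hv =>
    card_filter_get_lt_eq_voteKendallTau (hnodup v hv) fun a b => θ a < θ b

/-- The minimum of the discrete loss over injective rating
vectors equals the minimum, over strict linear orders on `A`, of the sum of
Kendall-tau distances to the votes; and an injective `θ` minimizes the
discrete loss iff the ranking it induces (`a ≻ b` iff `θ a > θ b`) is an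
optimal ranking. -/
theorem sco_discrete_loss_min_eq_optimal_ranking_min
    {A : Type*} [Fintype A] [DecidableEq A]
    (profile : Multiset (List A)) (hnodup : ∀ v ∈ profile, v.Nodup) :
    sInf {n : ℕ | ∃ θ : A → ℝ, Function.Injective θ ∧ discreteLoss profile θ = n} =
      sInf {n : ℕ | ∃ r : LinearOrder A, profileKendallTau profile r = n} ∧
    ∀ (θ : A → ℝ) (hθ : Function.Injective θ),
      ((∀ θ' : A → ℝ, Function.Injective θ' →
          discreteLoss profile θ ≤ discreteLoss profile θ') ↔
        (∀ r : LinearOrder A,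
          profileKendallTau profile (LinearOrder.lift' θ hθ) ≤
            profileKendallTau profile r)) := by
  have hloss := fun {θ : A → ℝ} (hθ : Function.Injective θ) =>
    discreteLoss_eq_profileKendallTau hnodup hθ
  refine ⟨congrArg sInf <| Set.ext fun n => ⟨?_, ?_⟩,
    fun θ hθ => ⟨fun H r => ?_, fun H θ' hθ' => ?_⟩⟩
  · rintro ⟨θ, hθ, rfl⟩
    exact ⟨_, (hloss hθ).symm⟩
  · rintro ⟨r, rfl⟩
    obtain ⟨θ, hθ, rfl⟩ := r.exists_lift'_real_eq
    exact ⟨θ, hθ, hloss hθ⟩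
  · obtain ⟨θ', hθ', rfl⟩ := r.exists_lift'_real_eq
    rw [← hloss hθ, ← hloss hθ']
    exact H θ' hθ'
  · rw [hloss hθ, hloss hθ']
    exact H _
end

section
/- Raising a Condorcet winner to the top strictly decreases the sigmoid loss: let c ∈ A be a strong Condorcet winner for the preference-count matrix N, and let θ : A → ℝ be a rating vector with θ(c) < max_{a ≠ c} θ(a). Then the vector θ' defined by θ'(c) = max_{a ≠ c} θ(a) and θ'(a) = θ(a) for a ≠ c satisfies L̃(θ') < L̃(θ). In particular, at any θ where c does not have one of the highest ratings, the loss can be strictly decreased without changing any rating other than that of c. -/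
/-!
Raising `θ c` only changes the terms of the loss that involve `c`, and those come in pairs
`{c, b}`. As `σ (-t) = 1 - σ t`, the pair contributes
`N(b,c) + (N(c,b) - N(b,c)) σ(θ b - θ c)`, which strictly decreases as `θ c` grows because
`c` beats `b`.
-/

open Finset Function

theorem Finset.sum_sum_eq_diag_add_sum_erase {A M : Type*} [Fintype A] [DecidableEq A]
    [AddCommMonoid M] (F : A → A → M) (c : A) :
    ∑ a, ∑ b, F a b = F c c + ∑ b ∈ univ.erase c, (F c b + F b c)
      + ∑ a ∈ univ.erase c, ∑ b ∈ univ.erase c, F a b := by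
  simp only [← add_sum_erase univ _ (mem_univ c), sum_add_distrib]
  abel

theorem sum_sum_update_sub_lt {A : Type*} [Fintype A] [DecidableEq A] (f : A → A → ℝ → ℝ)
    (θ : A → ℝ) (c : A) (x : ℝ) (hne : (univ.erase c).Nonempty)
    (hpair : ∀ b ≠ c, f c b (θ b - x) + f b c (x - θ b)
      < f c b (θ b - θ c) + f b c (θ c - θ b)) :
    ∑ a, ∑ b, f a b (update θ c x b - update θ c x a) < ∑ a, ∑ b, f a b (θ b - θ a) := by
  rw [sum_sum_eq_diag_add_sum_erase _ c, sum_sum_eq_diag_add_sum_erase _ c]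
  have hcross : ∑ b ∈ univ.erase c,
      (f c b (update θ c x b - update θ c x c) + f b c (update θ c x c - update θ c x b))
      < ∑ b ∈ univ.erase c, (f c b (θ b - θ c) + f b c (θ c - θ b)) := by
    refine sum_lt_sum_of_nonempty hne fun b hb => ?_
    have hbc := ne_of_mem_erase hb
    simpa only [update_self, update_of_ne hbc] using hpair b hbc
  have hrest : ∑ a ∈ univ.erase c, ∑ b ∈ univ.erase c, f a b (update θ c x b - update θ c x a)
      = ∑ a ∈ univ.erase c, ∑ b ∈ univ.erase c, f a b (θ b - θ a) :=
    sum_congr rfl fun a ha => sum_congr rfl fun b hb => by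
      rw [update_of_ne (ne_of_mem_erase ha), update_of_ne (ne_of_mem_erase hb)]
  simp only [sub_self] at hcross hrest ⊢
  linarith

theorem weighted_pair_lt_of_lt {σ : ℝ → ℝ} (hmono : StrictMono σ)
    (hneg : ∀ t, σ (-t) = 1 - σ t) {m n x x' y : ℝ} (hmn : m < n) (hx : x < x') :
    n * σ (y - x') + m * σ (x' - y) < n * σ (y - x) + m * σ (x - y) := by
  have hσ : σ (y - x') < σ (y - x) := hmono (by linarith)
  rw [← neg_sub y x', ← neg_sub y x, hneg, hneg]
  nlinarith

theorem sco_raising_condorcet_winner_decreases_loss_general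
    {A : Type*} [Fintype A] [DecidableEq A]
    (N : A → A → ℕ)
    (τ : ℝ) (hτ : 0 < τ)
    (c : A) (hc : ∀ b, b ≠ c → N b c < N c b)
    (σ : ℝ → ℝ) (hσ : ∀ x, σ x = 1 / (1 + Real.exp (-x / τ)))
    (L : (A → ℝ) → ℝ)
    (hL : ∀ θ : A → ℝ, L θ = ∑ a : A, ∑ b : A, (N a b : ℝ) * σ (θ b - θ a))
    (θ : A → ℝ)
    (hne : (Finset.univ.erase c).Nonempty)
    (hlt : θ c < (Finset.univ.erase c).sup' hne θ) :
    L (Function.update θ c ((Finset.univ.erase c).sup' hne θ)) < L θ := by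
  have hσ_sigmoid : σ = fun t => Real.sigmoid (t / τ) := by
    funext t
    rw [hσ, Real.sigmoid, neg_div, one_div]
  have hmono : StrictMono σ :=
    hσ_sigmoid ▸ Real.sigmoid_strictMono.comp fun _ _ h => div_lt_div_of_pos_right h hτ
  have hneg : ∀ t, σ (-t) = 1 - σ t := by
    simp only [hσ_sigmoid, neg_div, Real.sigmoid_neg, implies_true]
  rw [hL, hL]
  exact sum_sum_update_sub_lt (fun a b t => (N a b : ℝ) * σ t) θ c _ hne fun b hb =>
    weighted_pair_lt_of_lt hmono hneg (by exact_mod_cast hc b hb) hlt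

/-- Raising a strong Condorcet winner `c` to the top strictly
decreases the sigmoid loss: if `θ c < max_{a ≠ c} θ a`, then updating the
rating of `c` to `max_{a ≠ c} θ a` (leaving all other ratings unchanged)
strictly decreases `L̃`. -/
theorem sco_raising_condorcet_winner_decreases_loss
    {A : Type*} [Fintype A] [DecidableEq A]
    (hA : 1 < Fintype.card A)
    (N : A → A → ℕ) (hdiag : ∀ a, N a a = 0)
    (τ : ℝ) (hτ : 0 < τ)
    (c : A) (hc : ∀ b, b ≠ c → N b c < N c b)
    (σ : ℝ → ℝ) (hσ : ∀ x, σ x = 1 / (1 + Real.exp (-x / τ)))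
    (L : (A → ℝ) → ℝ)
    (hL : ∀ θ : A → ℝ, L θ = ∑ a : A, ∑ b : A, (N a b : ℝ) * σ (θ b - θ a))
    (θ : A → ℝ)
    (hne : (Finset.univ.erase c).Nonempty)
    (hlt : θ c < (Finset.univ.erase c).sup' hne θ) :
    L (Function.update θ c ((Finset.univ.erase c).sup' hne θ)) < L θ :=
  sco_raising_condorcet_winner_decreases_loss_general N τ hτ c hc σ hσ L hL θ hne hlt
end
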